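/- There exists a sequence γ : ℕ → ℂ such that the Hankel matrix {γ_{j+k}}_{j,k≥0} belongs to the injective tensor product ℓ¹⊗̌ℓ¹ but ∑_{k=0}^∞ (1+k)|γ_k| = ∞; that is, the sum of the moduli of the matrix entries of this Hankel matrix is infinite. (Negative solution to Mazur's Problem 88.) -/

import Mathlib

open Filter Finset

/-- The Hankel matrix `{γ_{j+k}}` belongs to the injective tensor product `ℓ¹ ⊗̌ ℓ¹`:
the partial bilinear sums against sequences in the unit ball of `ℓ^∞` are uniformly bounded. -/
def HankelInInj (γ : ℕ → ℂ) : Prop :=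
  ∃ C : ℝ, ∀ (N : ℕ) (x y : ℕ → ℂ), (∀ j, ‖x j‖ ≤ 1) → (∀ k, ‖y k‖ ≤ 1) →
    ‖∑ j ∈ Finset.range (N + 1), ∑ k ∈ Finset.range (N + 1), γ (j + k) * x j * y k‖ ≤ C

/-!
On `[4 ^ s, 2 * 4 ^ s)` the sequence is the chirp `w_s e^{iπ m² / 4 ^ s}` with weight
`w_s = 1 / (16 ^ s (s + 1))`, and it vanishes elsewhere. Each block contributes at least
`16 ^ s w_s = 1 / (s + 1)` to `∑ (1 + k) |γ_k|`, so that series diverges like the harmonic series.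

For the Hankel form of one block, with `n = 4 ^ s`, the chirp factorises as
`e^{iπ(j+k)²/n} = e^{iπj²/n} e^{iπk²/n} e^{2πijk/n}`. Expanding the cutoff `1_{[n, 2n)}(j + k)` in
the characters of `ℤ/4n`, whose coefficients have `ℓ¹` norm `O(log n)`, turns the block into a
combination of bilinear forms of the matrix `(e^{2πijk/n})_{j,k<2n}` against vectors bounded by 1.
By Parseval each of these is at most `(2n)² / √n`, so the block is `O(2^{-s})` uniformly in the
truncation, and the blocks sum to a bounded form.
-/

open Complex
open scoped Real

theorem Finset.sum_range_mul_eq_sum_sum {M : Type*} [AddCommMonoid M] (f : ℕ → M) (n c : ℕ) :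
    ∑ k ∈ range (n * c), f k = ∑ q ∈ range c, ∑ r ∈ range n, f (n * q + r) := by
  induction c with
  | zero => simp
  | succ c ih => rw [Nat.mul_succ, sum_range_add, ih, sum_range_succ]

namespace IsPrimitiveRoot

variable {ζ : ℂ} {n : ℕ}

theorem sum_range_pow_pow_of_dvd (hζ : IsPrimitiveRoot ζ n) {J : ℕ} (hJ : n ∣ J) (m : ℕ) :
    ∑ j ∈ range J, (ζ ^ m) ^ j = if n ∣ m then (J : ℂ) else 0 := by
  split_ifs with hm
  · simp [(hζ.pow_eq_one_iff_dvd m).2 hm]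
  · have hne : ζ ^ m ≠ 1 := fun h => hm ((hζ.pow_eq_one_iff_dvd m).1 h)
    obtain ⟨c, rfl⟩ := hJ
    rw [geom_sum_eq hne, ← pow_mul, show m * (n * c) = n * (c * m) by ring, pow_mul,
      hζ.pow_eq_one, one_pow, sub_self, zero_div]

theorem conj_pow_eq_pow_sub (hζ : IsPrimitiveRoot ζ n) {t : ℕ} (ht : t ≤ n) :
    (starRingEnd ℂ) (ζ ^ t) = ζ ^ (n - t) := by
  rcases Nat.eq_zero_or_pos n with rfl | hn
  · obtain rfl := Nat.le_zero.1 ht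
    simp
  rw [← Complex.inv_eq_conj (by rw [norm_pow, hζ.norm'_eq_one hn.ne', one_pow])]
  refine inv_eq_of_mul_eq_one_right ?_
  rw [← pow_add, Nat.add_sub_cancel' ht, hζ.pow_eq_one]

theorem sum_range_pow_mul_conj_pow (hζ : IsPrimitiveRoot ζ n) {J r t : ℕ} (hJ : n ∣ J)
    (hr : r < n) (ht : t < n) :
    ∑ j ∈ range J, (ζ ^ r * (starRingEnd ℂ) (ζ ^ t)) ^ j = if r = t then (J : ℂ) else 0 := by
  rw [hζ.conj_pow_eq_pow_sub ht.le, ← pow_add, hζ.sum_range_pow_pow_of_dvd hJ]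
  congr 1
  refine propext ⟨fun h => ?_, fun h => by rw [h, Nat.add_sub_cancel' ht.le]⟩
  have := Nat.eq_of_dvd_of_lt_two_mul (by omega) h (by omega)
  omega

theorem sum_range_norm_sq_sum_pow_mul (hζ : IsPrimitiveRoot ζ n) {J : ℕ} (hJ : n ∣ J)
    (a : ℕ → ℂ) :
    ∑ j ∈ range J, ‖∑ r ∈ range n, ζ ^ (j * r) * a r‖ ^ 2 = J * ∑ r ∈ range n, ‖a r‖ ^ 2 := by
  have expand : ∀ j, (‖∑ r ∈ range n, ζ ^ (j * r) * a r‖ : ℂ) ^ 2 =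
      ∑ r ∈ range n, ∑ t ∈ range n,
        a r * (starRingEnd ℂ) (a t) * (ζ ^ r * (starRingEnd ℂ) (ζ ^ t)) ^ j := by
    intro j
    rw [← Complex.mul_conj', map_sum, sum_mul_sum]
    refine sum_congr rfl fun r _ => sum_congr rfl fun t _ => ?_
    simp only [map_mul, map_pow, mul_pow, ← pow_mul]
    ring
  have diagonal : ∀ r ∈ range n, ∑ j ∈ range J, ∑ t ∈ range n,
      a r * (starRingEnd ℂ) (a t) * (ζ ^ r * (starRingEnd ℂ) (ζ ^ t)) ^ j =
        J * (‖a r‖ : ℂ) ^ 2 := by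
    intro r hr
    rw [sum_comm]
    simp_rw [← mul_sum]
    rw [sum_congr rfl fun t ht => by
      rw [hζ.sum_range_pow_mul_conj_pow hJ (mem_range.1 hr) (mem_range.1 ht)]]
    simp [hr, Complex.mul_conj', mul_comm]
  apply Complex.ofReal_injective
  push_cast
  rw [sum_congr rfl fun j _ => expand j, sum_comm, sum_congr rfl diagonal, mul_sum]

theorem sum_range_mul_pow_mul (hζ : IsPrimitiveRoot ζ n) (c j : ℕ) (v : ℕ → ℂ) :
    ∑ k ∈ range (n * c), ζ ^ (j * k) * v k =
      ∑ r ∈ range n, ζ ^ (j * r) * ∑ q ∈ range c, v (n * q + r) := by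
  simp only [sum_range_mul_eq_sum_sum, mul_sum]
  rw [sum_comm]
  refine sum_congr rfl fun r _ => sum_congr rfl fun q _ => ?_
  rw [show j * (n * q + r) = n * (j * q) + j * r by ring, pow_add, pow_mul, hζ.pow_eq_one,
    one_pow, one_mul]

theorem norm_sum_sum_pow_mul_mul_le (hζ : IsPrimitiveRoot ζ n) {J : ℕ} (hJ : n ∣ J)
    {u v : ℕ → ℂ} (hu : ∀ j, ‖u j‖ ≤ 1) (hv : ∀ k, ‖v k‖ ≤ 1) :
    ‖∑ j ∈ range J, ∑ k ∈ range J, ζ ^ (j * k) * u j * v k‖ ≤ J ^ 2 / √n := by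
  rcases Nat.eq_zero_or_pos n with rfl | hn
  · simp [Nat.eq_zero_of_zero_dvd hJ]
  obtain ⟨c, rfl⟩ := hJ
  set V : ℕ → ℂ := fun r => ∑ q ∈ range c, v (n * q + r)
  set w : ℕ → ℂ := fun j => ∑ r ∈ range n, ζ ^ (j * r) * V r
  have hV : ∀ r, ‖V r‖ ≤ c := fun r =>
    (norm_sum_le _ _).trans <| (sum_le_sum fun q _ => hv _).trans (by simp)
  have hw_sq : ∑ j ∈ range (n * c), ‖w j‖ ^ 2 ≤ n ^ 2 * c ^ 3 := by
    rw [hζ.sum_range_norm_sq_sum_pow_mul (dvd_mul_right n c)]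
    calc ((n * c : ℕ) : ℝ) * ∑ r ∈ range n, ‖V r‖ ^ 2
        ≤ (n * c : ℕ) * ∑ r ∈ range n, (c : ℝ) ^ 2 := by gcongr with r; exact hV r
      _ = n ^ 2 * c ^ 3 := by rw [sum_const, card_range, nsmul_eq_mul]; push_cast; ring
  have hw_sum : ∑ j ∈ range (n * c), ‖w j‖ ≤ ((n * c : ℕ) : ℝ) ^ 2 / √n := by
    refine le_of_pow_le_pow_left₀ two_ne_zero (by positivity) ?_
    calc (∑ j ∈ range (n * c), ‖w j‖) ^ 2 ≤ (n * c : ℕ) * ∑ j ∈ range (n * c), ‖w j‖ ^ 2 := by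
          simpa using sq_sum_le_card_mul_sum_sq (s := range (n * c)) (f := fun j => ‖w j‖)
      _ ≤ (n * c : ℕ) * (n ^ 2 * c ^ 3) := by gcongr
      _ = (((n * c : ℕ) : ℝ) ^ 2 / √n) ^ 2 := by
          rw [div_pow, Real.sq_sqrt (by positivity)]
          field_simp
          push_cast
          ring
  calc ‖∑ j ∈ range (n * c), ∑ k ∈ range (n * c), ζ ^ (j * k) * u j * v k‖
      = ‖∑ j ∈ range (n * c), u j * w j‖ := by
        simp_rw [w, V, ← hζ.sum_range_mul_pow_mul, mul_sum]
        congr 1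
        exact sum_congr rfl fun j _ => sum_congr rfl fun k _ => by ring
    _ ≤ ∑ j ∈ range (n * c), ‖w j‖ :=
        (norm_sum_le _ _).trans <| sum_le_sum fun j _ => by
          rw [norm_mul]; exact mul_le_of_le_one_left (norm_nonneg _) (hu j)
    _ ≤ _ := hw_sum

end IsPrimitiveRoot

noncomputable def unitRoot (n : ℕ) : ℂ := exp (2 * π * I / n)

theorem isPrimitiveRoot_unitRoot {n : ℕ} (hn : n ≠ 0) : IsPrimitiveRoot (unitRoot n) n :=
  Complex.isPrimitiveRoot_exp n hn

theorem norm_unitRoot (n : ℕ) : ‖unitRoot n‖ = 1 := by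
  simp [unitRoot, norm_exp]

theorem unitRoot_pow (n u : ℕ) : unitRoot n ^ u = exp (2 * π * (u / n : ℝ) * I) := by
  rw [unitRoot, ← Complex.exp_nat_mul]
  congr 1
  push_cast
  ring

theorem four_mul_min_le_norm_exp_sub_one {x : ℝ} (h0 : 0 ≤ x) (h1 : x ≤ 1) :
    4 * min x (1 - x) ≤ ‖exp (2 * π * x * I) - 1‖ := by
  have hsin : ‖exp (2 * π * x * I) - 1‖ = 2 * Real.sin (π * x) := by
    rw [show (2 * π * x * I : ℂ) = I * ((2 * π * x : ℝ) : ℂ) by push_cast; ring,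
      norm_exp_I_mul_ofReal_sub_one, norm_mul, show 2 * π * x / 2 = π * x by ring,
      Real.norm_of_nonneg (Real.sin_nonneg_of_nonneg_of_le_pi (by positivity)
        (by nlinarith [Real.pi_pos]))]
    norm_num
  rw [hsin]
  rcases le_total x (1 - x) with hx | hx
  · have := Real.mul_le_sin (x := π * x) (by positivity) (by nlinarith [Real.pi_pos])
    rw [min_eq_left hx]
    field_simp at this
    nlinarith [Real.pi_pos]
  · have := Real.mul_le_sin (x := π * (1 - x)) (by nlinarith [Real.pi_pos])
      (by nlinarith [Real.pi_pos])
    rw [show π * (1 - x) = π - π * x by ring, Real.sin_pi_sub] at this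
    rw [min_eq_right hx]
    field_simp at this
    nlinarith [Real.pi_pos]

theorem norm_geom_sum_Ico_le {z : ℂ} (hz : ‖z‖ = 1) (hz1 : z ≠ 1) (a b : ℕ) :
    ‖∑ t ∈ Ico a b, z ^ t‖ ≤ 2 / ‖z - 1‖ := by
  have hpos : 0 < ‖z - 1‖ := norm_pos_iff.2 (sub_ne_zero.2 hz1)
  rcases le_total a b with hab | hba
  · rw [geom_sum_Ico hz1 hab, norm_div]
    gcongr
    exact (norm_sub_le _ _).trans (by norm_num [hz])
  · rw [Ico_eq_empty_of_le hba, sum_empty, norm_zero]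
    positivity

noncomputable def indicatorFourierCoeff (P a b u : ℕ) : ℂ :=
  (P : ℂ)⁻¹ * ∑ t ∈ Ico a b, (starRingEnd ℂ) (unitRoot P ^ u) ^ t

theorem ite_mem_Ico_eq_sum_indicatorFourierCoeff {P a b m : ℕ} (hbP : b ≤ P) (hm : m < P) :
    (if m ∈ Ico a b then 1 else 0 : ℂ) =
      ∑ u ∈ range P, indicatorFourierCoeff P a b u * unitRoot P ^ (u * m) := by
  have hξ := isPrimitiveRoot_unitRoot (n := P) (by omega)
  simp_rw [indicatorFourierCoeff, mul_assoc, ← mul_sum, sum_mul]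
  rw [sum_comm]
  have hterm : ∀ t ∈ Ico a b,
      ∑ u ∈ range P, (starRingEnd ℂ) (unitRoot P ^ u) ^ t * unitRoot P ^ (u * m) =
        if m = t then (P : ℂ) else 0 := fun t ht => by
    rw [← hξ.sum_range_pow_mul_conj_pow dvd_rfl hm ((mem_Ico.1 ht).2.trans_le hbP)]
    refine sum_congr rfl fun u _ => ?_
    simp only [map_pow, mul_pow, ← pow_mul]
    ring
  rw [sum_congr rfl hterm, sum_ite_eq]
  split_ifs
  · rw [inv_mul_cancel₀ (by exact_mod_cast (show P ≠ 0 by omega))]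
  · rw [mul_zero]

theorem norm_indicatorFourierCoeff_zero_le {P a b : ℕ} (hbP : b ≤ P) :
    ‖indicatorFourierCoeff P a b 0‖ ≤ 1 := by
  rcases Nat.eq_zero_or_pos P with rfl | hP
  · simp [indicatorFourierCoeff]
  simp only [indicatorFourierCoeff, pow_zero, map_one, one_pow, sum_const, Nat.card_Ico,
    nsmul_eq_mul, mul_one, norm_mul, norm_inv, norm_natCast]
  rw [inv_mul_le_one₀ (by positivity)]
  exact_mod_cast (Nat.sub_le b a).trans hbP

theorem norm_indicatorFourierCoeff_le {P a b u : ℕ} (hu : u ∈ Ico 1 P) :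
    ‖indicatorFourierCoeff P a b u‖ ≤ 1 / (2 * u) + 1 / (2 * (P - u : ℕ)) := by
  obtain ⟨hu1, huP⟩ := mem_Ico.1 hu
  have hξ := isPrimitiveRoot_unitRoot (n := P) (by omega)
  have hξu : unitRoot P ^ u ≠ 1 := hξ.pow_ne_one_of_pos_of_lt (by omega) huP
  have hPpos : (0 : ℝ) < P := by exact_mod_cast (show 0 < P by omega)
  have hx0 : (0 : ℝ) < u / P := by positivity
  have hx1 : (u / P : ℝ) < 1 := (div_lt_one hPpos).2 (by exact_mod_cast huP)
  have hchord : 4 * min (u / P : ℝ) (1 - u / P) ≤ ‖unitRoot P ^ u - 1‖ := by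
    rw [unitRoot_pow]; exact four_mul_min_le_norm_exp_sub_one hx0.le hx1.le
  have hmin : 0 < min (u / P : ℝ) (1 - u / P) := lt_min hx0 (by linarith)
  have hgeom := norm_geom_sum_Ico_le (z := (starRingEnd ℂ) (unitRoot P ^ u))
    (by rw [RCLike.norm_conj, norm_pow, norm_unitRoot, one_pow])
    (fun h => hξu (by simpa using congrArg (starRingEnd ℂ) h)) a b
  rw [← map_one (starRingEnd ℂ), ← map_sub, RCLike.norm_conj] at hgeom
  calc ‖indicatorFourierCoeff P a b u‖ ≤ (P : ℝ)⁻¹ * (2 / (4 * min (u / P : ℝ) (1 - u / P))) := by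
        rw [indicatorFourierCoeff, norm_mul, norm_inv, norm_natCast]
        gcongr
        exact hgeom.trans (by gcongr)
    _ ≤ 1 / (2 * u) + 1 / (2 * (P - u : ℕ)) := by
        have hPu : ((P - u : ℕ) : ℝ) = P - u := by push_cast [huP.le]; ring
        have hu0 : (0 : ℝ) < u := by exact_mod_cast hu1
        have hPu0 : (0 : ℝ) < P - u := by rw [← hPu]; exact_mod_cast (show 0 < P - u by omega)
        rw [hPu]
        rcases min_choice (u / P : ℝ) (1 - u / P) with h | h <;> rw [h]
        · have : (P : ℝ)⁻¹ * (2 / (4 * (u / P))) = 1 / (2 * u) := by field_simp; ring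
          rw [this]; linarith [one_div_pos.2 (by linarith : (0:ℝ) < 2 * (P - u))]
        · have : (P : ℝ)⁻¹ * (2 / (4 * (1 - u / P))) = 1 / (2 * (P - u)) := by field_simp; ring
          rw [this]; linarith [one_div_pos.2 (by linarith : (0:ℝ) < 2 * u)]

theorem sum_range_norm_indicatorFourierCoeff_le {P a b : ℕ} (hbP : b ≤ P) :
    ∑ u ∈ range P, ‖indicatorFourierCoeff P a b u‖ ≤ 2 + Real.log P := by
  rcases Nat.eq_zero_or_pos P with rfl | hP
  · norm_num
  have hreflect :
      ∑ u ∈ Ico 1 P, (1 : ℝ) / (2 * (P - u : ℕ)) = ∑ u ∈ Ico 1 P, 1 / (2 * (u : ℝ)) := by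
    rw [sum_Ico_reflect (fun u : ℕ => (1 : ℝ) / (2 * u)) 1 (Nat.le_succ P), Nat.add_sub_cancel,
      Nat.add_sub_cancel_left]
  have hharmonic : ∑ u ∈ Ico 1 P, (u : ℝ)⁻¹ ≤ 1 + Real.log P := by
    refine le_trans ?_ (harmonic_le_one_add_log P)
    rw [harmonic_eq_sum_Icc]
    push_cast
    exact sum_le_sum_of_subset_of_nonneg Ico_subset_Icc_self fun _ _ _ => by positivity
  rw [range_eq_Ico, sum_eq_sum_Ico_succ_bot hP]
  calc ‖indicatorFourierCoeff P a b 0‖ + ∑ u ∈ Ico 1 P, ‖indicatorFourierCoeff P a b u‖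
      ≤ 1 + ∑ u ∈ Ico 1 P, (1 / (2 * (u : ℝ)) + 1 / (2 * (P - u : ℕ))) :=
        add_le_add (norm_indicatorFourierCoeff_zero_le hbP)
          (sum_le_sum fun u hu => norm_indicatorFourierCoeff_le hu)
    _ = 1 + ∑ u ∈ Ico 1 P, (u : ℝ)⁻¹ := by
        rw [sum_add_distrib, hreflect, ← two_mul, mul_sum]
        congr 2 with u
        field_simp
    _ ≤ 2 + Real.log P := by linarith

noncomputable def chirp (n m : ℕ) : ℂ := exp ((π * m ^ 2 / n : ℝ) * I)

theorem norm_chirp (n m : ℕ) : ‖chirp n m‖ = 1 :=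
  norm_exp_ofReal_mul_I _

theorem chirp_add (n j k : ℕ) : chirp n (j + k) = chirp n j * chirp n k * unitRoot n ^ (j * k) := by
  rw [chirp, chirp, chirp, unitRoot, ← Complex.exp_nat_mul, ← Complex.exp_add, ← Complex.exp_add]
  congr 1
  push_cast
  ring

theorem norm_sum_sum_ite_chirp_le {n J P a b : ℕ} (hJ : n ∣ J) (hJP : 2 * J ≤ P) (hbP : b ≤ P)
    {x y : ℕ → ℂ} (hx : ∀ j, ‖x j‖ ≤ 1) (hy : ∀ k, ‖y k‖ ≤ 1) :
    ‖∑ j ∈ range J, ∑ k ∈ range J,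
        (if j + k ∈ Ico a b then chirp n (j + k) else 0) * x j * y k‖ ≤
      J ^ 2 / √n * (2 + Real.log P) := by
  rcases Nat.eq_zero_or_pos n with rfl | hn
  · simp [Nat.eq_zero_of_zero_dvd hJ]
  have hζ := isPrimitiveRoot_unitRoot hn.ne'
  set ξ := unitRoot P
  have hmodulated : ∀ (u : ℕ) (z : ℕ → ℂ), (∀ j, ‖z j‖ ≤ 1) →
      ∀ j, ‖chirp n j * ξ ^ (u * j) * z j‖ ≤ 1 := fun u z hz j => by
    rw [norm_mul, norm_mul, norm_chirp, norm_pow, norm_unitRoot, one_pow, one_mul, one_mul]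
    exact hz j
  have hexpand : ∀ j ∈ range J, ∀ k ∈ range J,
      (if j + k ∈ Ico a b then chirp n (j + k) else 0) * x j * y k =
        ∑ u ∈ range P, indicatorFourierCoeff P a b u * (unitRoot n ^ (j * k) *
          (chirp n j * ξ ^ (u * j) * x j) * (chirp n k * ξ ^ (u * k) * y k)) := by
    intro j hj k hk
    rw [mem_range] at hj hk
    rw [← boole_mul, ite_mem_Ico_eq_sum_indicatorFourierCoeff hbP (by omega), sum_mul, sum_mul,
      sum_mul]
    refine sum_congr rfl fun u _ => ?_
    rw [chirp_add, mul_add, pow_add]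
    ring
  calc _ = ‖∑ u ∈ range P, indicatorFourierCoeff P a b u * ∑ j ∈ range J, ∑ k ∈ range J,
        unitRoot n ^ (j * k) * (chirp n j * ξ ^ (u * j) * x j) *
          (chirp n k * ξ ^ (u * k) * y k)‖ := by
        rw [sum_congr rfl fun j hj => sum_congr rfl fun k hk => hexpand j hj k hk]
        simp_rw [mul_sum]
        rw [sum_congr rfl fun j _ => sum_comm, sum_comm]
    _ ≤ ∑ u ∈ range P, ‖indicatorFourierCoeff P a b u‖ * (J ^ 2 / √n) := by
        refine (norm_sum_le _ _).trans (sum_le_sum fun u _ => ?_)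
        rw [norm_mul]
        gcongr
        exact hζ.norm_sum_sum_pow_mul_mul_le hJ (hmodulated u x hx) (hmodulated u y hy)
    _ ≤ J ^ 2 / √n * (2 + Real.log P) := by
        rw [← sum_mul, mul_comm]
        gcongr
        exact sum_range_norm_indicatorFourierCoeff_le hbP

theorem sum_range_sum_range_eq_of_le {M : Type*} [AddCommMonoid M] {A R : ℕ} (hAR : A ≤ R)
    (F : ℕ → ℕ → M) (hF : ∀ j k, A ≤ j ∨ A ≤ k → F j k = 0) :
    ∑ j ∈ range A, ∑ k ∈ range A, F j k = ∑ j ∈ range R, ∑ k ∈ range R, F j k := by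
  rw [← sum_product', ← sum_product']
  refine sum_subset (product_subset_product (range_subset_range.2 hAR)
    (range_subset_range.2 hAR)) fun p _ hp => hF _ _ ?_
  simp only [mem_product, mem_range, not_and_or, not_lt] at hp
  exact hp

theorem sum_hankel_eq_of_support {g : ℕ → ℂ} {J : ℕ} (hg : ∀ m, J ≤ m → g m = 0)
    (N : ℕ) (x y : ℕ → ℂ) :
    ∑ j ∈ range (N + 1), ∑ k ∈ range (N + 1), g (j + k) * x j * y k =
      ∑ j ∈ range J, ∑ k ∈ range J,
        g (j + k) * (if j ≤ N then x j else 0) * (if k ≤ N then y k else 0) := by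
  set F : ℕ → ℕ → ℂ := fun j k =>
    g (j + k) * (if j ≤ N then x j else 0) * (if k ≤ N then y k else 0)
  calc _ = ∑ j ∈ range (N + 1), ∑ k ∈ range (N + 1), F j k :=
        sum_congr rfl fun j hj => sum_congr rfl fun k hk => by
          simp only [F, if_pos (Nat.lt_succ_iff.1 (mem_range.1 hj)),
            if_pos (Nat.lt_succ_iff.1 (mem_range.1 hk))]
    _ = ∑ j ∈ range (N + 1 + J), ∑ k ∈ range (N + 1 + J), F j k :=
        sum_range_sum_range_eq_of_le (by omega) F fun j k h => by
          rcases h with h | h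
          · simp [F, show ¬ j ≤ N by omega]
          · simp [F, show ¬ k ≤ N by omega]
    _ = ∑ j ∈ range J, ∑ k ∈ range J, F j k :=
        (sum_range_sum_range_eq_of_le (by omega) F fun j k h => by
          simp [F, hg (j + k) (by omega)]).symm

theorem hankelInInj_of_sum_blocks {γ : ℕ → ℂ} (g : ℕ → ℕ → ℂ) {B : ℕ → ℝ} (hB : Summable B)
    (hγ : ∀ m S, m < S → γ m = ∑ s ∈ range S, g s m)
    (hg : ∀ s N (x y : ℕ → ℂ), (∀ j, ‖x j‖ ≤ 1) → (∀ k, ‖y k‖ ≤ 1) →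
      ‖∑ j ∈ range (N + 1), ∑ k ∈ range (N + 1), g s (j + k) * x j * y k‖ ≤ B s) :
    HankelInInj γ := by
  refine ⟨∑' s, B s, fun N x y hx hy => ?_⟩
  have hB0 : ∀ s, 0 ≤ B s := fun s =>
    (norm_nonneg _).trans (hg s 0 0 0 (by simp) (by simp))
  have hsplit : ∑ j ∈ range (N + 1), ∑ k ∈ range (N + 1), γ (j + k) * x j * y k =
      ∑ s ∈ range (2 * N + 1),
        ∑ j ∈ range (N + 1), ∑ k ∈ range (N + 1), g s (j + k) * x j * y k := by
    rw [sum_congr rfl fun j hj => sum_congr rfl fun k hk => by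
      rw [hγ (j + k) (2 * N + 1) (by rw [mem_range] at hj hk; omega), sum_mul, sum_mul]]
    rw [sum_congr rfl fun j _ => sum_comm, sum_comm]
  rw [hsplit]
  calc _ ≤ ∑ s ∈ range (2 * N + 1), B s :=
        (norm_sum_le _ _).trans (sum_le_sum fun s _ => hg s N x y hx hy)
    _ ≤ ∑' s, B s := hB.sum_le_tsum _ fun s _ => hB0 s

open Function in
theorem summable_sum_of_pairwise_disjoint {f : ℕ → ℝ} (hf : ∀ m, 0 ≤ f m) (h : Summable f)
    {I : ℕ → Finset ℕ} (hI : Pairwise (Disjoint on I)) :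
    Summable fun s => ∑ m ∈ I s, f m := by
  refine summable_of_sum_range_le (c := ∑' m, f m) (fun s => sum_nonneg fun m _ => hf m)
    fun S => ?_
  rw [← sum_biUnion (hI.set_pairwise _)]
  exact h.sum_le_tsum _ fun m _ => hf m

noncomputable def blockWeight (s : ℕ) : ℝ := ((16 : ℝ) ^ s * (s + 1))⁻¹

theorem blockWeight_nonneg (s : ℕ) : 0 ≤ blockWeight s := by
  rw [blockWeight]
  positivity

noncomputable def hankelBlock (s m : ℕ) : ℂ :=
  if m ∈ Ico (4 ^ s) (2 * 4 ^ s) then blockWeight s * chirp (4 ^ s) m else 0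

noncomputable def mazurSeq (m : ℕ) : ℂ := hankelBlock (Nat.log 4 m) m

theorem log_four_eq_of_mem_Ico {s m : ℕ} (h : m ∈ Ico (4 ^ s) (2 * 4 ^ s)) : Nat.log 4 m = s := by
  obtain ⟨h1, h2⟩ := mem_Ico.1 h
  exact Nat.log_eq_of_pow_le_of_lt_pow h1 (by rw [pow_succ]; omega)

theorem hankelBlock_eq_zero_of_ne {s m : ℕ} (h : s ≠ Nat.log 4 m) : hankelBlock s m = 0 :=
  if_neg fun hm => h (log_four_eq_of_mem_Ico hm).symm

theorem mazurSeq_eq_sum_hankelBlock {m S : ℕ} (hS : m < S) :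
    mazurSeq m = ∑ s ∈ range S, hankelBlock s m :=
  (sum_eq_single_of_mem _ (mem_range.2 ((Nat.log_le_self 4 m).trans_lt hS))
    fun _ _ h => hankelBlock_eq_zero_of_ne h).symm

theorem blockWeight_mul_le (s : ℕ) :
    blockWeight s * (((2 * 4 ^ s : ℕ) : ℝ) ^ 2 / √((4 ^ s : ℕ) : ℝ) *
      (2 + Real.log ((4 * 4 ^ s : ℕ) : ℝ))) ≤ 16 * (1 / 2) ^ s := by
  have h4 : ((4 ^ s : ℕ) : ℝ) = ((2 : ℝ) ^ s) ^ 2 := by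
    push_cast; rw [← pow_mul, mul_comm, pow_mul]; norm_num
  have h16 : (16 : ℝ) ^ s = ((2 : ℝ) ^ s) ^ 4 := by rw [← pow_mul, mul_comm, pow_mul]; norm_num
  have hlog : Real.log ((4 * 4 ^ s : ℕ) : ℝ) = (s + 1) * Real.log 4 := by
    rw [← pow_succ', Nat.cast_pow, Real.log_pow]; push_cast; ring
  have hlog4 : Real.log 4 < 2 := by
    rw [show (4 : ℝ) = 2 ^ 2 by norm_num, Real.log_pow]
    have := Real.log_two_lt_d9
    push_cast; linarith
  set t : ℝ := 2 ^ s with ht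
  have htpos : 0 < t := by positivity
  rw [blockWeight, show ((2 * 4 ^ s : ℕ) : ℝ) = 2 * t ^ 2 by push_cast [← h4]; ring, h4,
    Real.sqrt_sq htpos.le, hlog, h16, one_div_pow, ← ht]
  have hs : (0 : ℝ) < s + 1 := by positivity
  rw [inv_mul_le_iff₀ (by positivity)]
  calc (2 * t ^ 2) ^ 2 / t * (2 + (s + 1) * Real.log 4)
      = 4 * t ^ 3 * (2 + (s + 1) * Real.log 4) := by field_simp; norm_num
    _ ≤ 4 * t ^ 3 * (4 * (s + 1)) := by gcongr; nlinarith
    _ = t ^ 4 * (s + 1) * (16 * (1 / t)) := by field_simp; norm_num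

theorem norm_sum_hankelBlock_le (s N : ℕ) {x y : ℕ → ℂ} (hx : ∀ j, ‖x j‖ ≤ 1)
    (hy : ∀ k, ‖y k‖ ≤ 1) :
    ‖∑ j ∈ range (N + 1), ∑ k ∈ range (N + 1), hankelBlock s (j + k) * x j * y k‖ ≤
      16 * (1 / 2) ^ s := by
  have hsupp : ∀ m, 2 * 4 ^ s ≤ m → hankelBlock s m = 0 := fun m hm =>
    if_neg fun h => by rw [mem_Ico] at h; omega
  have htrunc : ∀ (z : ℕ → ℂ), (∀ j, ‖z j‖ ≤ 1) → ∀ j, ‖if j ≤ N then z j else 0‖ ≤ 1 :=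
    fun z hz j => by split_ifs <;> simp [hz]
  have hfactor : ∀ m, hankelBlock s m =
      blockWeight s * (if m ∈ Ico (4 ^ s) (2 * 4 ^ s) then chirp (4 ^ s) m else 0) := fun m => by
    rw [hankelBlock, mul_ite, mul_zero]
  have hw := blockWeight_nonneg s
  rw [sum_hankel_eq_of_support hsupp]
  simp_rw [hfactor, mul_assoc, ← mul_sum, norm_mul, norm_real, Real.norm_of_nonneg hw]
  refine le_trans ?_ (blockWeight_mul_le s)
  gcongr
  simp_rw [← mul_assoc]
  exact norm_sum_sum_ite_chirp_le (dvd_mul_left _ _) (by omega) (by omega) (htrunc x hx)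
    (htrunc y hy)

theorem inv_succ_le_sum_Ico_norm_mazurSeq (s : ℕ) :
    1 / ((s : ℝ) + 1) ≤ ∑ m ∈ Ico (4 ^ s : ℕ) (2 * 4 ^ s), (1 + (m : ℝ)) * ‖mazurSeq m‖ := by
  have hw := blockWeight_nonneg s
  calc 1 / ((s : ℝ) + 1) = ∑ _m ∈ Ico (4 ^ s) (2 * 4 ^ s), ((4 ^ s : ℕ) : ℝ) * blockWeight s := by
        rw [sum_const, Nat.card_Ico, show 2 * 4 ^ s - 4 ^ s = 4 ^ s by omega, nsmul_eq_mul,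
          blockWeight, ← mul_assoc]
        push_cast
        rw [← mul_pow]
        field_simp
        norm_num
    _ ≤ _ := sum_le_sum fun m hm => by
        rw [mazurSeq, log_four_eq_of_mem_Ico hm, hankelBlock, if_pos hm, norm_mul, norm_real,
          Real.norm_of_nonneg hw, norm_chirp, mul_one]
        gcongr
        have : ((4 ^ s : ℕ) : ℝ) ≤ m := by exact_mod_cast (mem_Ico.1 hm).1
        linarith

theorem not_summable_mazurSeq : ¬ Summable fun m : ℕ => (1 + (m : ℝ)) * ‖mazurSeq m‖ := by
  intro h
  have hblocks := summable_sum_of_pairwise_disjoint (fun m => by positivity) h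
    (I := fun s => Ico (4 ^ s) (2 * 4 ^ s)) fun s t hst => disjoint_left.2 fun m hs ht =>
      hst ((log_four_eq_of_mem_Ico hs).symm.trans (log_four_eq_of_mem_Ico ht))
  have hharmonic :=
    hblocks.of_nonneg_of_le (fun s => by positivity) inv_succ_le_sum_Ico_norm_mazurSeq
  exact Real.not_summable_one_div_natCast ((summable_nat_add_iff 1).1 (by simpa using hharmonic))

theorem mazur_problem88 :
    ∃ γ : ℕ → ℂ, HankelInInj γ ∧ ¬ Summable (fun k : ℕ => (1 + (k : ℝ)) * ‖γ k‖) :=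
  ⟨mazurSeq, hankelInInj_of_sum_blocks hankelBlock (summable_geometric_two.mul_left 16)
    (fun _ _ => mazurSeq_eq_sum_hankelBlock) (fun s N _ _ => norm_sum_hankelBlock_le s N),
    not_summable_mazurSeq⟩
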